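/- Let n be an even positive integer, let p ∈ [0,1]^n, and let z ∈ {0,1}^n be the rounded frequency vector defined by z_i = 1 if p_i ≥ 1/2 and z_i = 0 otherwise. If x is sampled from the univariate model with frequency vector p, then the probability that x is an optimum of EqualBlocksOneMax is at most exp( − (1/2) · Σ_{i=1}^{n} |p_i − z_i| ) = exp( − ‖p − z‖₁ / 2 ). -/
import Mathlib


/-- The probability that the univariate model with frequency vector `p` samples
exactly the bit string `x` (bits are independent, bit `i` is `true` with
probability `p i`). -/
noncomputable def univMass {n : ℕ} (p : Fin n → ℝ) (x : Fin n → Bool) : ℝ :=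
  ∏ i, if x i then p i else 1 - p i

open scoped Classical in
/-- The probability that a sample from the univariate model with frequency
vector `p` satisfies the predicate `A`. -/
noncomputable def univPr {n : ℕ} (p : Fin n → ℝ) (A : (Fin n → Bool) → Prop) : ℝ :=
  ∑ x : Fin n → Bool, if A x then univMass p x else 0

/-- `x` is an optimum of EqualBlocksOneMax on bit strings of length `2 * m`:
every block (pair of positions `2j` and `2j+1`, zero-based) has two equal bits. -/
def IsEBOMOptimum (m : ℕ) (x : Fin (2 * m) → Bool) : Prop :=
  ∀ j : Fin m,
    x ⟨2 * j.1, by have := j.2; omega⟩ = x ⟨2 * j.1 + 1, by have := j.2; omega⟩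

def blockEquiv (m : ℕ) : Fin m × Bool ≃ Fin (2 * m) where
  toFun q := ⟨2 * q.1.1 + (if q.2 then 1 else 0), by have := q.1.2; split <;> omega⟩
  invFun i := (⟨i.1 / 2, by have := i.2; omega⟩, decide (i.1 % 2 = 1))
  left_inv := by
    rintro ⟨⟨j, hj⟩, b⟩
    cases b <;> simp [Prod.ext_iff, Fin.ext_iff] <;> omega
  right_inv := by
    rintro ⟨i, hi⟩
    by_cases h : i % 2 = 1 <;> simp [Prod.ext_iff, Fin.ext_iff, h] <;> omega

def funEquiv (m : ℕ) : (Fin m → Bool → Bool) ≃ (Fin (2 * m) → Bool) where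
  toFun f i := f ((blockEquiv m).symm i).1 ((blockEquiv m).symm i).2
  invFun x j b := x (blockEquiv m (j, b))
  left_inv f := by funext j b; simp
  right_inv x := by funext i; simp

def bbEquiv : Bool × Bool ≃ (Bool → Bool) where
  toFun q b := if b then q.2 else q.1
  invFun g := (g false, g true)
  left_inv := by rintro ⟨u, v⟩; simp
  right_inv := by intro g; funext b; cases b <;> simp

lemma funEquiv_apply (m : ℕ) (f : Fin m → Bool → Bool) (j : Fin m) (b : Bool) :
    (funEquiv m) f (blockEquiv m (j, b)) = f j b := by
  simp [funEquiv]

lemma blockEquiv_false (m : ℕ) (j : Fin m) : (blockEquiv m (j, false)).1 = 2 * j.1 := by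
  simp [blockEquiv]

lemma blockEquiv_true (m : ℕ) (j : Fin m) : (blockEquiv m (j, true)).1 = 2 * j.1 + 1 := by
  simp [blockEquiv]

lemma dist_le (a : ℝ) (ha0 : 0 ≤ a) (ha1 : a ≤ 1) (za : Bool)
    (hza : za = true ↔ 1 / 2 ≤ a) :
    |a - (if za then 1 else 0)| ≤ a ∧ |a - (if za then 1 else 0)| ≤ 1 - a := by
  cases za with
  | false =>
    have h : a < 1 / 2 := by
      by_contra hc; push_neg at hc
      exact absurd (hza.mpr hc) (by simp)
    simp only [Bool.false_eq_true, if_false, sub_zero, abs_of_nonneg ha0]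
    exact ⟨le_refl a, by linarith⟩
  | true =>
    have h : 1 / 2 ≤ a := hza.mp rfl
    have e1 : |a - (if true then (1:ℝ) else 0)| = 1 - a := by
      simp only [if_true]
      rw [abs_sub_comm, abs_of_nonneg (by linarith)]
    rw [e1]
    exact ⟨by linarith, le_refl _⟩

lemma block_le (a b : ℝ) (ha0 : 0 ≤ a) (ha1 : a ≤ 1) (hb0 : 0 ≤ b) (hb1 : b ≤ 1)
    (da db : ℝ) (hda1 : da ≤ a) (hda2 : da ≤ 1 - a) (hdb1 : db ≤ b) (hdb2 : db ≤ 1 - b) :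
    a * b + (1 - a) * (1 - b) ≤ Real.exp (-(1 / 2) * (da + db)) := by
  have h1 : da * (1 - b) ≤ a * (1 - b) := mul_le_mul_of_nonneg_right hda1 (by linarith)
  have h2 : da * b ≤ (1 - a) * b := mul_le_mul_of_nonneg_right hda2 hb0
  have h3 : db * (1 - a) ≤ b * (1 - a) := mul_le_mul_of_nonneg_right hdb1 (by linarith)
  have h4 : db * a ≤ (1 - b) * a := mul_le_mul_of_nonneg_right hdb2 ha0
  have key : a * b + (1 - a) * (1 - b) ≤ 1 - (1 / 2) * (da + db) := by nlinarith [h1, h2, h3, h4]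
  have hexp := Real.add_one_le_exp (-(1 / 2) * (da + db))
  linarith

theorem univPr_optimum_le_exp_l1_dist
    (m : ℕ) (hm : 0 < m)
    (p : Fin (2 * m) → ℝ) (hp : ∀ i, p i ∈ Set.Icc (0 : ℝ) 1)
    (z : Fin (2 * m) → Bool) (hz : ∀ i, z i = true ↔ (1 : ℝ) / 2 ≤ p i) :
    univPr p (IsEBOMOptimum m) ≤
      Real.exp (-(1 / 2) * ∑ i, |p i - if z i then 1 else 0|) := by
  classical
  set e := blockEquiv m with he
  set E := funEquiv m with hE
  set a : Fin m → ℝ := fun j => p (e (j, false)) with ha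
  set b : Fin m → ℝ := fun j => p (e (j, true)) with hb
  set d : Fin (2 * m) → ℝ := fun i => |p i - if z i then 1 else 0| with hd
  set W : Fin m → (Bool → Bool) → ℝ := fun j g =>
    if g false = g true then
      (if g false then a j else 1 - a j) * (if g true then b j else 1 - b j)
    else 0 with hW
  -- identify the block positions
  have hblockF : ∀ j : Fin m, (⟨2 * j.1, by have := j.2; omega⟩ : Fin (2 * m)) = e (j, false) := by
    intro j; apply Fin.ext; simp [he, blockEquiv_false]
  have hblockT : ∀ j : Fin m,
      (⟨2 * j.1 + 1, by have := j.2; omega⟩ : Fin (2 * m)) = e (j, true) := by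
    intro j; apply Fin.ext; simp [he, blockEquiv_true]
  -- Step 1
  have step1 : univPr p (IsEBOMOptimum m) = ∑ f : Fin m → Bool → Bool, ∏ j, W j (f j) := by
    unfold univPr
    rw [← Equiv.sum_comp E (fun x => if IsEBOMOptimum m x then univMass p x else 0)]
    refine Finset.sum_congr rfl fun f _ => ?_
    have hOpt : IsEBOMOptimum m (E f) ↔ ∀ j, f j false = f j true := by
      unfold IsEBOMOptimum
      constructor
      · intro h j
        have := h j
        rwa [hblockF j, hblockT j, hE, funEquiv_apply, funEquiv_apply] at this
      · intro h j
        rw [hblockF j, hblockT j, hE, funEquiv_apply, funEquiv_apply]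
        exact h j
    have hMass : univMass p (E f) =
        ∏ j, (if f j false then a j else 1 - a j) * (if f j true then b j else 1 - b j) := by
      unfold univMass
      rw [← Equiv.prod_comp e (fun i => if E f i then p i else 1 - p i)]
      rw [Fintype.prod_prod_type]
      refine Finset.prod_congr rfl fun j _ => ?_
      rw [Fintype.prod_bool]
      rw [hE, funEquiv_apply, funEquiv_apply]
      rw [mul_comm]
    by_cases hc : ∀ j, f j false = f j true
    · rw [if_pos (hOpt.mpr hc), hMass]
      exact Finset.prod_congr rfl fun j _ => by rw [hW]; simp only; rw [if_pos (hc j)]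
    · rw [if_neg fun h => hc (hOpt.mp h)]
      obtain ⟨j0, hj0⟩ := not_forall.mp hc
      exact (Finset.prod_eq_zero (Finset.mem_univ j0) (by simp [hW, hj0])).symm
  -- Step 2: factorize
  have step2 : (∑ f : Fin m → Bool → Bool, ∏ j, W j (f j)) = ∏ j, ∑ g : Bool → Bool, W j g := by
    have h := Finset.prod_univ_sum (fun _ : Fin m => (Finset.univ : Finset (Bool → Bool)))
      (fun j g => W j g)
    rw [Fintype.piFinset_univ] at h
    exact h.symm
  -- Step 3: compute each block sum
  have step3 : ∀ j, (∑ g : Bool → Bool, W j g) = a j * b j + (1 - a j) * (1 - b j) := by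
    intro j
    rw [← Equiv.sum_comp bbEquiv (W j), Fintype.sum_prod_type]
    simp [hW, bbEquiv, Fintype.sum_bool]
  -- Step 4: per-block bound
  have step4 : ∀ j : Fin m, a j * b j + (1 - a j) * (1 - b j) ≤
      Real.exp (-(1 / 2) * (d (e (j, false)) + d (e (j, true)))) := by
    intro j
    obtain ⟨ha0, ha1⟩ := hp (e (j, false))
    obtain ⟨hb0, hb1⟩ := hp (e (j, true))
    obtain ⟨hda1, hda2⟩ := dist_le (a j) ha0 ha1 (z (e (j, false))) (hz (e (j, false)))
    obtain ⟨hdb1, hdb2⟩ := dist_le (b j) hb0 hb1 (z (e (j, true))) (hz (e (j, true)))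
    exact block_le (a j) (b j) ha0 ha1 hb0 hb1 _ _ hda1 hda2 hdb1 hdb2
  have hq0 : ∀ j : Fin m, 0 ≤ a j * b j + (1 - a j) * (1 - b j) := by
    intro j
    obtain ⟨ha0, ha1⟩ := hp (e (j, false))
    obtain ⟨hb0, hb1⟩ := hp (e (j, true))
    have := mul_nonneg ha0 hb0
    have := mul_nonneg (by linarith : (0:ℝ) ≤ 1 - a j) (by linarith : (0:ℝ) ≤ 1 - b j)
    linarith
  -- combine
  calc univPr p (IsEBOMOptimum m)
      = ∏ j, (a j * b j + (1 - a j) * (1 - b j)) := by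
        rw [step1, step2]; exact Finset.prod_congr rfl fun j _ => step3 j
    _ ≤ ∏ j, Real.exp (-(1 / 2) * (d (e (j, false)) + d (e (j, true)))) :=
        Finset.prod_le_prod (fun j _ => hq0 j) (fun j _ => step4 j)
    _ = Real.exp (∑ j, -(1 / 2) * (d (e (j, false)) + d (e (j, true)))) :=
        (Real.exp_sum _ _).symm
    _ = Real.exp (-(1 / 2) * ∑ i, |p i - if z i then 1 else 0|) := by
        congr 1
        rw [← Finset.mul_sum]
        congr 1
        have hsum : ∑ i, d i = ∑ q : Fin m × Bool, d (e q) := (Equiv.sum_comp e d).symm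
        have : ∑ i, |p i - if z i then 1 else 0| = ∑ i, d i := rfl
        rw [this, hsum, Fintype.sum_prod_type]
        refine Finset.sum_congr rfl fun j _ => ?_
        rw [Fintype.sum_bool]
        ring
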